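/- The sequence (Tr[B_p^4])^{1/(4p)} converges to ((7+√33)/2)^{1/4} as p → ∞ (the limit taken over real numbers), where B_p = A_p + A_p^T. -/

import Mathlib

open Matrix

/-- Index type for the recursively defined block matrices `A p`,
of cardinality `2 ^ p`. -/
def IdxA : ℕ → Type
  | 0 => Fin 1
  | p + 1 => IdxA p ⊕ IdxA p

instance instFintypeIdxA : ∀ p, Fintype (IdxA p)
  | 0 => inferInstanceAs (Fintype (Fin 1))
  | p + 1 => letI := instFintypeIdxA p; inferInstanceAs (Fintype (IdxA p ⊕ IdxA p))

instance instDecidableEqIdxA : ∀ p, DecidableEq (IdxA p)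
  | 0 => inferInstanceAs (DecidableEq (Fin 1))
  | p + 1 => letI := instDecidableEqIdxA p; inferInstanceAs (DecidableEq (IdxA p ⊕ IdxA p))

/-- `A 0` is the 1×1 matrix with single entry 1, and
`A (p+1) = [[A p, (A p)ᵀ], [0, A p]]` as a 2×2 block matrix. -/
def A : (p : ℕ) → Matrix (IdxA p) (IdxA p) ℤ
  | 0 => Matrix.of fun _ _ => (1 : ℤ)
  | p + 1 => Matrix.fromBlocks (A p) (A p)ᵀ 0 (A p)

/-- The symmetrized transfer matrix `B p = A p + (A p)ᵀ`. -/
def B (p : ℕ) : Matrix (IdxA p) (IdxA p) ℤ := A p + (A p)ᵀ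

/-!
Writing `X = A p` and `B p = X + Xᵀ`, the trace of `(B p)^4` expands into the four cyclic
word classes `tr(X⁴)`, `tr(X³Xᵀ)`, `tr(X²Xᵀ²)`, `tr(XXᵀXXᵀ)`. Passing from `A p` to the block
matrix `A (p+1)` multiplies the first two by `2` and `5`, and transforms the last two by the
matrix `[[4, 2], [4, 3]]`, whose Perron root is `λ = (7 + √33)/2` (`growthRate`). Hence
`tr((B p)^4)` lies between `λ^p` and a constant times `λ^p`, and its `(4p)`-th root tends
to `λ^(1/4)`.
-/

open Filter Topology

namespace Matrix

variable {m n R : Type*} [Fintype m] [Fintype n]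

theorem trace_fromBlocks [AddCommMonoid R] (a : Matrix m m R) (b : Matrix m n R)
    (c : Matrix n m R) (d : Matrix n n R) :
    trace (fromBlocks a b c d) = trace a + trace d := by
  simp [trace, Fintype.sum_sum_type]

section CommSemiring

variable [NonUnitalCommSemiring R]

theorem trace_mul_mul_mul_cycle (a b c d : Matrix n n R) :
    trace (a * b * c * d) = trace (b * c * d * a) := by
  simp only [Matrix.mul_assoc]
  rw [trace_mul_comm, Matrix.mul_assoc, Matrix.mul_assoc]

theorem trace_transpose_mul_mul_mul (a b c d : Matrix n n R) :
    trace (aᵀ * bᵀ * cᵀ * dᵀ) = trace (d * c * b * a) := by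
  rw [← trace_transpose (d * c * b * a)]
  simp only [transpose_mul, Matrix.mul_assoc]

end CommSemiring

variable [CommRing R]

/-- Up to rotation and transpose-reversal, each of the sixteen words in `X` and `Xᵀ` is one of
the four on the right. -/
theorem trace_add_transpose_pow_four [DecidableEq n] (X : Matrix n n R) :
    trace ((X + Xᵀ) ^ 4) = 2 * trace (X * X * X * X) + 8 * trace (X * X * X * Xᵀ)
      + 4 * trace (X * X * Xᵀ * Xᵀ) + 2 * trace (X * Xᵀ * X * Xᵀ) := by
  have cyc := @trace_mul_mul_mul_cycle n R _ _
  have h₁ : trace (X * X * Xᵀ * X) = trace (X * X * X * Xᵀ) := by rw [cyc, cyc, cyc]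
  have h₂ : trace (X * Xᵀ * X * X) = trace (X * X * X * Xᵀ) := by rw [cyc, cyc]
  have h₃ : trace (Xᵀ * X * X * X) = trace (X * X * X * Xᵀ) := by rw [cyc]
  have h₄ : trace (X * Xᵀ * Xᵀ * Xᵀ) = trace (X * X * X * Xᵀ) := by
    simpa using trace_transpose_mul_mul_mul Xᵀ X X X
  have h₅ : trace (Xᵀ * X * Xᵀ * Xᵀ) = trace (X * X * X * Xᵀ) := by rw [cyc, h₄]
  have h₆ : trace (Xᵀ * Xᵀ * X * Xᵀ) = trace (X * X * X * Xᵀ) := by rw [cyc, h₅]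
  have h₇ : trace (Xᵀ * Xᵀ * Xᵀ * X) = trace (X * X * X * Xᵀ) := by rw [cyc, h₆]
  have h₈ : trace (X * Xᵀ * Xᵀ * X) = trace (X * X * Xᵀ * Xᵀ) := by rw [cyc, cyc, cyc]
  have h₉ : trace (Xᵀ * Xᵀ * X * X) = trace (X * X * Xᵀ * Xᵀ) := by rw [cyc, cyc]
  have h₁₀ : trace (Xᵀ * X * X * Xᵀ) = trace (X * X * Xᵀ * Xᵀ) := by rw [cyc]
  have h₁₁ : trace (Xᵀ * X * Xᵀ * X) = trace (X * Xᵀ * X * Xᵀ) := by rw [cyc]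
  have h₁₂ : trace (Xᵀ * Xᵀ * Xᵀ * Xᵀ) = trace (X * X * X * X) :=
    trace_transpose_mul_mul_mul X X X X
  rw [pow_succ, pow_succ, pow_succ, pow_one]
  simp only [Matrix.add_mul, Matrix.mul_add, trace_add]
  linear_combination h₁ + h₂ + h₃ + h₄ + h₅ + h₆ + h₇ + h₈ + h₉ + h₁₀ + h₁₁ + h₁₂

section fromBlocks

variable (X : Matrix n n R)

local notation "M" => (fromBlocks X Xᵀ 0 X : Matrix (n ⊕ n) (n ⊕ n) R)

theorem trace_fromBlocks_self_transpose_words :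
    trace (M * M * M * M) = 2 * trace (X * X * X * X) ∧
    trace (M * M * M * Mᵀ) = 5 * trace (X * X * X * Xᵀ) ∧
    trace (M * M * Mᵀ * Mᵀ) = 4 * trace (X * X * Xᵀ * Xᵀ) + 2 * trace (X * Xᵀ * X * Xᵀ) ∧
    trace (M * Mᵀ * M * Mᵀ) = 4 * trace (X * X * Xᵀ * Xᵀ) + 3 * trace (X * Xᵀ * X * Xᵀ) := by
  have cyc := @trace_mul_mul_mul_cycle n R _ _
  simp only [fromBlocks_transpose, transpose_zero, transpose_transpose, fromBlocks_multiply,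
    trace_fromBlocks, Matrix.add_mul, Matrix.mul_zero, Matrix.zero_mul,
    add_zero, zero_add, trace_add]
  refine ⟨by ring, ?_, ?_, ?_⟩
  · linear_combination cyc X X Xᵀ X + 2 * cyc X Xᵀ X X + 3 * cyc Xᵀ X X X
  · linear_combination 2 * cyc Xᵀ X X Xᵀ + cyc X Xᵀ Xᵀ X + cyc Xᵀ X Xᵀ X + cyc Xᵀ Xᵀ X X
  · linear_combination 3 * cyc Xᵀ X X Xᵀ + cyc X Xᵀ Xᵀ X + cyc Xᵀ X Xᵀ X + 2 * cyc Xᵀ Xᵀ X X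

end fromBlocks

end Matrix

theorem tendsto_rpow_one_div_of_le_of_le {a : ℕ → ℝ} {c C r : ℝ} (hc : 0 < c) (hr : 0 < r)
    (hlow : ∀ n, c * r ^ n ≤ a n) (hup : ∀ n, a n ≤ C * r ^ n) :
    Tendsto (fun n : ℕ => a n ^ (1 / (n : ℝ))) atTop (𝓝 r) := by
  have root {k : ℝ} (hk : 0 ≤ k) {n : ℕ} (hn : n ≠ 0) :
      (k * r ^ n) ^ (1 / (n : ℝ)) = k ^ (1 / (n : ℝ)) * r := by
    rw [Real.mul_rpow hk (by positivity), ← Real.rpow_natCast, ← Real.rpow_mul hr.le,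
      mul_one_div_cancel (Nat.cast_ne_zero.2 hn), Real.rpow_one]
  have lim {k : ℝ} (hk : 0 < k) : Tendsto (fun n : ℕ => k ^ (1 / (n : ℝ)) * r) atTop (𝓝 r) := by
    simpa using (tendsto_const_nhds.rpow tendsto_one_div_atTop_nhds_zero_nat
      (Or.inl hk.ne')).mul_const r
  have hC : 0 < C := by linarith [hlow 0, hup 0, pow_zero r]
  refine tendsto_of_tendsto_of_tendsto_of_le_of_le' (lim hc) (lim hC) ?_ ?_ <;>
    filter_upwards [eventually_ne_atTop 0] with n hn
  · rw [← root hc.le hn]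
    exact Real.rpow_le_rpow (by positivity) (hlow n) (by positivity)
  · rw [← root hC.le hn]
    exact Real.rpow_le_rpow ((by positivity : 0 ≤ c * r ^ n).trans (hlow n)) (hup n)
      (by positivity)

def mixedTrace (p : ℕ) : ℤ := trace (A p * A p * (A p)ᵀ * (A p)ᵀ)

def alternatingTrace (p : ℕ) : ℤ := trace (A p * (A p)ᵀ * A p * (A p)ᵀ)

theorem trace_A_mul_A_mul_A_mul_A (p : ℕ) : trace (A p * A p * A p * A p) = 2 ^ p := by
  induction p with
  | zero => decide
  | succ p ih => exact (trace_fromBlocks_self_transpose_words (A p)).1.trans (by rw [ih]; ring)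

theorem trace_A_mul_A_mul_A_mul_transpose (p : ℕ) :
    trace (A p * A p * A p * (A p)ᵀ) = 5 ^ p := by
  induction p with
  | zero => decide
  | succ p ih =>
    exact (trace_fromBlocks_self_transpose_words (A p)).2.1.trans (by rw [ih]; ring)

theorem mixedTrace_succ (p : ℕ) :
    mixedTrace (p + 1) = 4 * mixedTrace p + 2 * alternatingTrace p :=
  (trace_fromBlocks_self_transpose_words (A p)).2.2.1

theorem alternatingTrace_succ (p : ℕ) :
    alternatingTrace (p + 1) = 4 * mixedTrace p + 3 * alternatingTrace p :=
  (trace_fromBlocks_self_transpose_words (A p)).2.2.2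

theorem mixedTrace_nonneg_and_alternatingTrace_nonneg (p : ℕ) :
    0 ≤ mixedTrace p ∧ 0 ≤ alternatingTrace p := by
  induction p with
  | zero => decide
  | succ p ih =>
    rw [mixedTrace_succ, alternatingTrace_succ]
    constructor <;> linarith [ih.1, ih.2]

theorem trace_B_pow_four (p : ℕ) :
    trace (B p ^ 4) = 2 * 2 ^ p + 8 * 5 ^ p + 4 * mixedTrace p + 2 * alternatingTrace p := by
  rw [B, trace_add_transpose_pow_four, trace_A_mul_A_mul_A_mul_A,
    trace_A_mul_A_mul_A_mul_transpose, mixedTrace, alternatingTrace]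

noncomputable def growthRate : ℝ := (7 + √33) / 2

theorem growthRate_sq : growthRate ^ 2 = 7 * growthRate - 4 := by
  have : √33 ^ 2 = 33 := Real.sq_sqrt (by norm_num)
  unfold growthRate
  linear_combination this / 4

theorem six_lt_growthRate : 6 < growthRate := by
  have : 5 < √33 := by
    rw [Real.lt_sqrt (by norm_num)]
    norm_num
  unfold growthRate
  linarith

theorem growthRate_lt_seven : growthRate < 7 := by
  nlinarith [growthRate_sq, six_lt_growthRate]

/-- `(4, growthRate - 4)` is a left eigenvector, for the eigenvalue `growthRate`, of the matrix
`[[4, 2], [4, 3]]` of `mixedTrace_succ` and `alternatingTrace_succ`. -/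
theorem four_mul_mixedTrace_add_mul_alternatingTrace (p : ℕ) :
    4 * (mixedTrace p : ℝ) + (growthRate - 4) * alternatingTrace p = growthRate ^ (p + 1) := by
  induction p with
  | zero =>
    simp [show mixedTrace 0 = 1 by decide, show alternatingTrace 0 = 1 by decide]
  | succ p ih =>
    rw [mixedTrace_succ, alternatingTrace_succ, pow_succ, ← ih]
    push_cast
    linear_combination -(alternatingTrace p : ℝ) * growthRate_sq

theorem trace_B_pow_four_bounds (p : ℕ) :
    growthRate ^ p ≤ ((trace (B p ^ 4) : ℤ) : ℝ) ∧
      ((trace (B p ^ 4) : ℤ) : ℝ) ≤ 17 * growthRate ^ p := by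
  obtain ⟨hm, ha⟩ := mixedTrace_nonneg_and_alternatingTrace_nonneg p
  have hm' : (0 : ℝ) ≤ mixedTrace p := by exact_mod_cast hm
  have ha' : (0 : ℝ) ≤ alternatingTrace p := by exact_mod_cast ha
  have hrate := four_mul_mixedTrace_add_mul_alternatingTrace p
  have h6 := six_lt_growthRate
  have h7 := growthRate_lt_seven
  have hpow : 0 < growthRate ^ p := by positivity
  have h2 : (2 : ℝ) ^ p ≤ growthRate ^ p := pow_le_pow_left₀ (by norm_num) (by linarith) p
  have h5 : (5 : ℝ) ^ p ≤ growthRate ^ p := pow_le_pow_left₀ (by norm_num) (by linarith) p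
  -- As `2 < growthRate - 4 < 3`, `hrate` squeezes `4 * mixedTrace p + 2 * alternatingTrace p`
  -- between `(2/3) * growthRate ^ (p + 1)` and `growthRate ^ (p + 1)`.
  rw [pow_succ] at hrate
  rw [trace_B_pow_four]
  push_cast
  constructor
  · nlinarith [mul_nonneg (by linarith : (0 : ℝ) ≤ 7 - growthRate) ha',
      mul_le_mul_of_nonneg_left h6.le hpow.le, pow_nonneg (by norm_num : (0 : ℝ) ≤ 2) p,
      pow_nonneg (by norm_num : (0 : ℝ) ≤ 5) p]
  · nlinarith [mul_nonneg (by linarith : (0 : ℝ) ≤ growthRate - 6) ha',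
      mul_le_mul_of_nonneg_left h7.le hpow.le]

theorem trace_B_fourth_root_tendsto :
    Filter.Tendsto
      (fun p : ℕ => ((Matrix.trace ((B p) ^ 4) : ℤ) : ℝ) ^ (1 / (4 * (p : ℝ))))
      Filter.atTop (nhds (((7 + Real.sqrt 33) / 2) ^ ((1 : ℝ) / 4))) := by
  have hrate : 0 < growthRate := by linarith [six_lt_growthRate]
  have hroot := tendsto_rpow_one_div_of_le_of_le one_pos hrate
    (fun p => by simpa using (trace_B_pow_four_bounds p).1) fun p => (trace_B_pow_four_bounds p).2
  refine (hroot.rpow_const (p := 1 / 4) (Or.inl hrate.ne')).congr fun p => ?_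
  have htrace : (0 : ℝ) ≤ (trace (B p ^ 4) : ℤ) :=
    (pow_pos hrate p).le.trans (trace_B_pow_four_bounds p).1
  rw [← Real.rpow_mul htrace]
  ring_nf
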